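/- arXiv:1101.5133 — 2 statements merged into one kernel-verified Lean document; each statement's English description precedes it below -/
import Mathlib

section
/- Let φ₀, φ₁ : ℝⁿ → ℝ be smooth ℤⁿ-periodic functions such that u = ½|x|² + φ₀ and v = ½|x|² + φ₁ are convex with positive definite Hessians and both satisfy Abreu's equation Σ_{i,j} ∂²u^{ij}/∂x_i∂x_j = A = Σ_{i,j} ∂²v^{ij}/∂x_i∂x_j with the same right-hand side A. Then φ₀ − φ₁ is constant. -/
open MeasureTheory Matrix

/-- Partial derivative in the `i`-th coordinate direction. -/
noncomputable def pd {n : ℕ} (i : Fin n) (f : (Fin n → ℝ) → ℝ) (x : Fin n → ℝ) : ℝ :=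
  fderiv ℝ f x (Pi.single i 1)

/-- Hessian matrix `(u_{ij})` of `u` at `x`. -/
noncomputable def hess {n : ℕ} (u : (Fin n → ℝ) → ℝ) (x : Fin n → ℝ) :
    Matrix (Fin n) (Fin n) ℝ :=
  Matrix.of fun i j => pd i (pd j u) x

/-- `f : ℝⁿ → ℝ` is ℤⁿ-periodic. -/
def ZPer {n : ℕ} (f : (Fin n → ℝ) → ℝ) : Prop :=
  ∀ (x : Fin n → ℝ) (k : Fin n → ℤ), f (x + fun i => (k i : ℝ)) = f x

/-- Abreu's operator `∑_{i,j} ∂²u^{ij}/∂x_i∂x_j`, where `(u^{ij})` is the inverse Hessian. -/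
noncomputable def abreuOp {n : ℕ} (u : (Fin n → ℝ) → ℝ) (x : Fin n → ℝ) : ℝ :=
  ∑ i, ∑ j, pd i (pd j (fun z => (hess u z)⁻¹ i j)) x

/-!
Write `U`, `V` for the Hessians of `u`, `v` and `W = U - V`, the Hessian of the periodic
function `h = φ₀ - φ₁`. Subtracting the two Abreu equations, the periodic matrix field
`G = U⁻¹ - V⁻¹ = -U⁻¹ W V⁻¹` satisfies `∑ ∂ᵢ∂ⱼ Gᵢⱼ = 0`. Testing this against `h` and
integrating by parts twice over the unit cube (no boundary terms, by periodicity) gives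
`∫ tr (U⁻¹ W V⁻¹ W) = 0`. Since `U⁻¹`, `V⁻¹` are positive definite and `W` is symmetric, the
integrand is nonnegative and vanishes only where `W = 0`. Hence `h` has zero Hessian, so it is
affine, and a periodic affine function is constant.
-/

open Set
open scoped ContDiff

variable {n : ℕ}

section PartialDerivatives

variable {f g : (Fin n → ℝ) → ℝ} {x : Fin n → ℝ}

lemma ContDiff.pd {k m : WithTop ℕ∞} (hf : ContDiff ℝ k f) (hmk : m + 1 ≤ k) (i : Fin n) :
    ContDiff ℝ m (pd i f) :=
  (hf.fderiv_right hmk).clm_apply contDiff_const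

lemma pd_add (i : Fin n) (hf : DifferentiableAt ℝ f x) (hg : DifferentiableAt ℝ g x) :
    pd i (fun y => f y + g y) x = pd i f x + pd i g x := by
  simp [pd, fderiv_fun_add hf hg]

lemma pd_sub (i : Fin n) (hf : DifferentiableAt ℝ f x) (hg : DifferentiableAt ℝ g x) :
    pd i (fun y => f y - g y) x = pd i f x - pd i g x := by
  simp [pd, fderiv_fun_sub hf hg]

lemma pd_mul (i : Fin n) (hf : DifferentiableAt ℝ f x) (hg : DifferentiableAt ℝ g x) :
    pd i (fun y => f y * g y) x = pd i f x * g x + f x * pd i g x := by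
  simp [pd, fderiv_fun_mul hf hg]
  ring

lemma pd_pd_sub (i j : Fin n) (hf : ContDiff ℝ 2 f) (hg : ContDiff ℝ 2 g) :
    pd i (pd j fun y => f y - g y) x = pd i (pd j f) x - pd i (pd j g) x := by
  have hf' := hf.differentiable (by norm_num)
  have hg' := hg.differentiable (by norm_num)
  have hsub : pd j (fun y => f y - g y) = fun y => pd j f y - pd j g y :=
    funext fun y => pd_sub j (hf' y) (hg' y)
  rw [hsub]
  exact pd_sub i (((hf.pd (by norm_num) j).differentiable one_ne_zero) x)
    (((hg.pd (by norm_num) j).differentiable one_ne_zero) x)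

lemma pd_pd_comm (hf : ContDiff ℝ 2 f) (i j : Fin n) : pd i (pd j f) x = pd j (pd i f) x := by
  have hd : Differentiable ℝ (fderiv ℝ f) :=
    (hf.fderiv_right (m := 1) le_rfl).differentiable one_ne_zero
  have key : ∀ a b : Fin n, pd a (pd b f) x =
      fderiv ℝ (fderiv ℝ f) x (Pi.single a 1) (Pi.single b 1) := by
    intro a b
    change fderiv ℝ (fun y => fderiv ℝ f y (Pi.single b 1)) x (Pi.single a 1) = _
    simp [fderiv_clm_apply (hd x) (differentiableAt_const _)]
  rw [key, key, hf.contDiffAt.isSymmSndFDerivAt (by simp)]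

lemma pd_coord (i j : Fin n) : pd i (fun y => y j) x = if i = j then 1 else 0 := by
  simp [pd, (hasFDerivAt_apply j x).fderiv, Pi.single_apply, eq_comm]

lemma pd_half_sum_sq (j : Fin n) : pd j (fun y => (1 / 2 : ℝ) * ∑ i, y i ^ 2) x = x j := by
  rw [pd, ((HasFDerivAt.fun_sum fun i _ =>
    (hasFDerivAt_apply (𝕜 := ℝ) i x).pow 2).const_mul (1 / 2 : ℝ)).fderiv]
  simp [Pi.single_apply]

theorem ContinuousLinearMap.ext_pi_single {L L' : (Fin n → ℝ) →L[ℝ] ℝ}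
    (h : ∀ i, L (Pi.single i 1) = L' (Pi.single i 1)) : L = L' :=
  ContinuousLinearMap.coe_injective (LinearMap.pi_ext' fun i => LinearMap.ext_ring (h i))

end PartialDerivatives

section Periodic

variable {f g : (Fin n → ℝ) → ℝ}

lemma ZPer.sub (hf : ZPer f) (hg : ZPer g) : ZPer fun x => f x - g x := by
  intro x k
  simp only [hf x k, hg x k]

lemma ZPer.mul (hf : ZPer f) (hg : ZPer g) : ZPer fun x => f x * g x := by
  intro x k
  simp only [hf x k, hg x k]

lemma ZPer.pd (hf : ZPer f) (i : Fin n) : ZPer (pd i f) := by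
  intro x k
  have hshift : (fun y => f (y + fun i => (k i : ℝ))) = f := funext fun y => hf y k
  simp only [_root_.pd, ← fderiv_comp_add_right, hshift]

lemma ZPer.apply_add_single (hf : ZPer f) (x : Fin n → ℝ) (i : Fin n) :
    f (x + Pi.single i 1) = f x := by
  have hcast : (fun j => ((Pi.single i 1 : Fin n → ℤ) j : ℝ)) = Pi.single i 1 := by
    ext j
    simp [Pi.single_apply]
  rw [← hcast]
  exact hf x _

lemma exists_add_intCast_mem_Icc (x : Fin n → ℝ) :
    ∃ k : Fin n → ℤ, (x + fun i => (k i : ℝ)) ∈ Icc 0 1 := by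
  refine ⟨fun i => -⌊x i⌋, fun i => ?_, fun i => ?_⟩ <;>
    simp [← sub_eq_add_neg, (Int.fract_lt_one (x i)).le]

end Periodic

section Integration

variable {f g : (Fin n → ℝ) → ℝ}

lemma continuous_pd (hf : ContDiff ℝ 1 f) (i : Fin n) : Continuous (pd i f) :=
  (hf.pd (m := 0) (by simp) i).continuous

lemma ZPer.apply_insertNth_one {m : ℕ} {f : (Fin (m + 1) → ℝ) → ℝ} (hf : ZPer f)
    (j : Fin (m + 1)) (y : Fin m → ℝ) : f (j.insertNth 1 y) = f (j.insertNth 0 y) := by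
  have hshift : Fin.insertNth (α := fun _ => ℝ) j 1 y = j.insertNth 0 y + Pi.single j 1 := by
    rw [← Fin.insertNth_zero_right, ← Fin.insertNth_add, zero_add, add_zero]
  rw [hshift, hf.apply_add_single]

theorem integral_divergence_eq_zero_of_zPer {F : Fin n → (Fin n → ℝ) → ℝ}
    (hF : ∀ j, ContDiff ℝ 1 (F j)) (hper : ∀ j, ZPer (F j)) :
    ∫ x in Icc 0 1, ∑ j, pd j (F j) x = 0 := by
  cases n with
  | zero => simp
  | succ m =>
    simp only [pd]
    rw [integral_divergence_of_hasFDerivAt_off_countable' 0 1 zero_le_one F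
      (fun j => fderiv ℝ (F j)) ∅ countable_empty (fun j => (hF j).continuous.continuousOn)
      (fun x _ j => ((hF j).differentiable one_ne_zero x).hasFDerivAt)
      (continuous_finsetSum _ fun j _ => continuous_pd (hF j) j).integrableOn_Icc]
    simp [(hper _).apply_insertNth_one]

theorem integral_pd_eq_zero_of_zPer (hper : ZPer f) (hf : ContDiff ℝ 1 f) (i : Fin n) :
    ∫ x in Icc 0 1, pd i f x = 0 := by
  set F : Fin n → (Fin n → ℝ) → ℝ := Pi.single i f
  have hsingle : ∀ j, ContDiff ℝ 1 (F j) ∧ ZPer (F j) := by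
    intro j
    rcases eq_or_ne j i with rfl | hj
    · simpa [F] using ⟨hf, hper⟩
    · simpa [F, hj] using ⟨contDiff_const (c := (0 : ℝ)), fun _ _ => rfl⟩
  have hsum : ∀ x, ∑ j, pd j (F j) x = pd i f x := fun x => by
    rw [Finset.sum_eq_single i (fun j _ hj => by simp [F, hj, pd]) (by simp)]
    simp [F]
  simpa only [hsum] using
    integral_divergence_eq_zero_of_zPer (fun j => (hsingle j).1) fun j => (hsingle j).2

theorem integral_pd_mul_eq_neg_of_zPer (hf : ZPer f) (hg : ZPer g) (hf₁ : ContDiff ℝ 1 f)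
    (hg₁ : ContDiff ℝ 1 g) (i : Fin n) :
    ∫ x in Icc 0 1, pd i f x * g x = -∫ x in Icc 0 1, f x * pd i g x := by
  have hprod := integral_pd_eq_zero_of_zPer (hf.mul hg) (hf₁.mul hg₁) i
  simp_rw [pd_mul i ((hf₁.differentiable one_ne_zero) _) ((hg₁.differentiable one_ne_zero) _)]
    at hprod
  have hint₁ : IntegrableOn (fun x => pd i f x * g x) (Icc 0 1) :=
    ((continuous_pd hf₁ i).mul hg₁.continuous).integrableOn_Icc
  have hint₂ : IntegrableOn (fun x => f x * pd i g x) (Icc 0 1) :=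
    (hf₁.continuous.mul (continuous_pd hg₁ i)).integrableOn_Icc
  rw [integral_add hint₁ hint₂] at hprod
  exact eq_neg_of_add_eq_zero_left hprod

theorem integral_pd_pd_mul_eq_of_zPer (hf : ZPer f) (hg : ZPer g) (hf₂ : ContDiff ℝ 2 f)
    (hg₂ : ContDiff ℝ 2 g) (i j : Fin n) :
    ∫ x in Icc 0 1, pd i (pd j f) x * g x = ∫ x in Icc 0 1, f x * pd j (pd i g) x := by
  rw [integral_pd_mul_eq_neg_of_zPer (hf.pd j) hg (hf₂.pd (by norm_num) j)
      (hg₂.of_le (by norm_num)) i,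
    integral_pd_mul_eq_neg_of_zPer hf (hg.pd i) (hf₂.of_le (by norm_num))
      (hg₂.pd (by norm_num) i) j, neg_neg]

theorem eqOn_zero_of_integral_Icc_eq_zero (hf : Continuous f) (hf₀ : ∀ x, 0 ≤ f x)
    (hint : ∫ x in Icc 0 1, f x = 0) : EqOn f 0 (Icc 0 1) := by
  have hae : f =ᵐ[volume.restrict (Icc 0 1)] 0 :=
    (integral_eq_zero_iff_of_nonneg hf₀ hf.integrableOn_Icc).1 hint
  have hbox : (univ.pi fun _ : Fin n => Ioo (0 : ℝ) 1) ⊆ Icc 0 1 := by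
    rw [← pi_univ_Icc]
    exact pi_mono fun _ _ => Ioo_subset_Icc_self
  have hclosure : Icc 0 1 ⊆ closure (univ.pi fun _ : Fin n => Ioo (0 : ℝ) 1) := by
    rw [closure_pi_set, closure_Ioo zero_ne_one, pi_univ_Icc]
    rfl
  exact ((Measure.eqOn_open_of_ae_eq (ae_restrict_of_ae_restrict_of_subset hbox hae)
    (isOpen_set_pi finite_univ fun _ _ => isOpen_Ioo) hf.continuousOn
    continuousOn_const).closure hf continuous_const).mono hclosure

end Integration

section MatrixValued

variable {m E : Type*} [Fintype m] [DecidableEq m] [NormedAddCommGroup E] [NormedSpace ℝ E]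
  {k : WithTop ℕ∞} {M : E → Matrix m m ℝ}

lemma contDiff_det (hM : ∀ i j, ContDiff ℝ k fun x => M x i j) :
    ContDiff ℝ k fun x => (M x).det := by
  simp only [det_apply']
  exact ContDiff.sum fun σ _ => contDiff_const.mul (contDiff_prod fun i _ => hM (σ i) i)

lemma contDiff_adjugate_apply (hM : ∀ i j, ContDiff ℝ k fun x => M x i j) (i j : m) :
    ContDiff ℝ k fun x => (M x).adjugate i j := by
  simp only [adjugate_apply]
  refine contDiff_det fun a b => ?_
  by_cases h : a = j <;> simp [updateRow_apply, h, hM, contDiff_const]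

lemma contDiff_inv_apply (hM : ∀ i j, ContDiff ℝ k fun x => M x i j)
    (hdet : ∀ x, (M x).det ≠ 0) (i j : m) : ContDiff ℝ k fun x => (M x)⁻¹ i j := by
  simp only [inv_def, Ring.inverse_eq_inv', Matrix.smul_apply, smul_eq_mul]
  exact ((contDiff_det hM).inv hdet).mul (contDiff_adjugate_apply hM i j)

end MatrixValued

section Hessian

variable {f g : (Fin n → ℝ) → ℝ}

lemma ContDiff.hess_apply (hf : ContDiff ℝ ∞ f) (i j : Fin n) :
    ContDiff ℝ ∞ fun x => hess f x i j :=
  (hf.pd (m := ∞) (by simp) j).pd (m := ∞) (by simp) i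

lemma hess_add (hf : ContDiff ℝ 2 f) (hg : ContDiff ℝ 2 g) (x : Fin n → ℝ) :
    hess (fun y => f y + g y) x = hess f x + hess g x := by
  ext i j
  have hsum : pd j (fun y => f y + g y) = fun y => pd j f y + pd j g y :=
    funext fun y => pd_add j ((hf.differentiable two_ne_zero) y) ((hg.differentiable two_ne_zero) y)
  simp only [hess, of_apply, Matrix.add_apply, hsum]
  exact pd_add i (((hf.pd (by norm_num) j).differentiable one_ne_zero) x)
    (((hg.pd (by norm_num) j).differentiable one_ne_zero) x)

lemma hess_sub (hf : ContDiff ℝ 2 f) (hg : ContDiff ℝ 2 g) (x : Fin n → ℝ) :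
    hess (fun y => f y - g y) x = hess f x - hess g x := by
  ext i j
  exact pd_pd_sub i j hf hg

lemma hess_isHermitian (hf : ContDiff ℝ 2 f) (x : Fin n → ℝ) : (hess f x).IsHermitian := by
  ext i j
  simp [hess, pd_pd_comm hf]

lemma contDiff_half_sum_sq {k : WithTop ℕ∞} :
    ContDiff ℝ k fun y : Fin n → ℝ => (1 / 2 : ℝ) * ∑ i, y i ^ 2 := by
  fun_prop

lemma hess_half_sum_sq (x : Fin n → ℝ) :
    hess (fun y => (1 / 2 : ℝ) * ∑ i, y i ^ 2) x = 1 := by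
  ext i j
  have hgrad : pd j (fun y => (1 / 2 : ℝ) * ∑ i, y i ^ 2) = fun y => y j :=
    funext fun _ => pd_half_sum_sq j
  rw [hess, of_apply, hgrad, pd_coord, one_apply]

lemma ZPer.hess_add_intCast (hf : ZPer f) (x : Fin n → ℝ) (k : Fin n → ℤ) :
    hess f (x + fun i => (k i : ℝ)) = hess f x := by
  ext i j
  exact (hf.pd j).pd i x k

lemma ZPer.hess_half_sum_sq_add (hf : ZPer f) (hf₂ : ContDiff ℝ 2 f) (x : Fin n → ℝ)
    (k : Fin n → ℤ) :
    hess (fun y => (1 / 2 : ℝ) * ∑ i, y i ^ 2 + f y) (x + fun i => (k i : ℝ)) =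
      hess (fun y => (1 / 2 : ℝ) * ∑ i, y i ^ 2 + f y) x := by
  rw [hess_add contDiff_half_sum_sq hf₂, hess_add contDiff_half_sum_sq hf₂, hess_half_sum_sq,
    hess_half_sum_sq, hf.hess_add_intCast]

end Hessian

namespace Matrix

open scoped MatrixOrder ComplexOrder

variable {m 𝕜 : Type*} [Fintype m] [RCLike 𝕜]

lemma trace_conjTranspose_mul_self_mul_mul_eq (B C : Matrix m m 𝕜) {W : Matrix m m 𝕜}
    (hW : W.IsHermitian) :
    (Bᴴ * B * W * (Cᴴ * C) * W).trace = ((C * W * Bᴴ)ᴴ * (C * W * Bᴴ)).trace := by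
  simp only [conjTranspose_mul, conjTranspose_conjTranspose, hW.eq, Matrix.mul_assoc]
  rw [trace_mul_comm]
  simp only [Matrix.mul_assoc]

variable [DecidableEq m]

lemma PosSemidef.exists_eq_conjTranspose_mul_self {P : Matrix m m 𝕜} (hP : P.PosSemidef) :
    ∃ B : Matrix m m 𝕜, P = Bᴴ * B :=
  CStarAlgebra.nonneg_iff_eq_star_mul_self.mp hP.nonneg

lemma PosSemidef.trace_mul_mul_mul_nonneg {P Q W : Matrix m m 𝕜} (hP : P.PosSemidef)
    (hQ : Q.PosSemidef) (hW : W.IsHermitian) : 0 ≤ (P * W * Q * W).trace := by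
  obtain ⟨B, rfl⟩ := hP.exists_eq_conjTranspose_mul_self
  obtain ⟨C, rfl⟩ := hQ.exists_eq_conjTranspose_mul_self
  rw [trace_conjTranspose_mul_self_mul_mul_eq B C hW]
  exact (posSemidef_conjTranspose_mul_self _).trace_nonneg

lemma PosDef.eq_zero_of_trace_mul_mul_mul_eq_zero {P Q W : Matrix m m 𝕜} (hP : P.PosDef)
    (hQ : Q.PosDef) (hW : W.IsHermitian) (h : (P * W * Q * W).trace = 0) : W = 0 := by
  have hPWQ : P * W * Q = 0 := by
    obtain ⟨B, rfl⟩ := hP.posSemidef.exists_eq_conjTranspose_mul_self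
    obtain ⟨C, rfl⟩ := hQ.posSemidef.exists_eq_conjTranspose_mul_self
    rw [trace_conjTranspose_mul_self_mul_mul_eq B C hW,
      trace_conjTranspose_mul_self_eq_zero_iff] at h
    calc Bᴴ * B * W * (Cᴴ * C) = Bᴴ * (C * W * Bᴴ)ᴴ * C := by
          simp only [conjTranspose_mul, conjTranspose_conjTranspose, hW.eq, Matrix.mul_assoc]
      _ = 0 := by rw [h]; simp
  rwa [Matrix.mul_assoc, hP.isUnit.mul_right_eq_zero, hQ.isUnit.mul_left_eq_zero] at hPWQ

lemma trace_inv_sub_inv_mul_sub {R : Type*} [CommRing R] {U V : Matrix m m R} (hU : IsUnit U)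
    (hV : IsUnit V) :
    ((U⁻¹ - V⁻¹) * (U - V)).trace = -(U⁻¹ * (U - V) * V⁻¹ * (U - V)).trace := by
  rw [inv_sub_inv (iff_of_true hU hV), ← neg_sub U V]
  simp only [Matrix.mul_neg, Matrix.neg_mul, trace_neg]

end Matrix

lemma integral_Icc_sum_sum {ι κ : Type*} [Fintype ι] [Fintype κ]
    {F : ι → κ → (Fin n → ℝ) → ℝ} (hF : ∀ i j, Continuous (F i j)) :
    ∫ x in Icc 0 1, ∑ i, ∑ j, F i j x = ∑ i, ∑ j, ∫ x in Icc 0 1, F i j x := by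
  rw [integral_finsetSum _ fun i _ =>
    (continuous_finsetSum _ fun j _ => hF i j).integrableOn_Icc]
  exact Finset.sum_congr rfl fun i _ =>
    integral_finsetSum _ fun j _ => (hF i j).integrableOn_Icc

theorem integral_sum_mul_hess_eq_zero_of_zPer {G : Fin n → Fin n → (Fin n → ℝ) → ℝ}
    {h : (Fin n → ℝ) → ℝ} (hG : ∀ i j, ContDiff ℝ 2 (G i j))
    (hGper : ∀ i j, ZPer (G i j)) (hh : ContDiff ℝ 2 h) (hhper : ZPer h)
    (hdiv : ∀ x, ∑ i, ∑ j, pd i (pd j (G i j)) x = 0) :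
    ∫ x in Icc 0 1, ∑ i, ∑ j, G i j x * hess h x j i = 0 := by
  have hcont₂ : ∀ {f : (Fin n → ℝ) → ℝ}, ContDiff ℝ 2 f →
      ∀ i j, Continuous (pd i (pd j f)) :=
    fun hf i j => continuous_pd (hf.pd (by norm_num) j) i
  calc ∫ x in Icc 0 1, ∑ i, ∑ j, G i j x * hess h x j i
      = ∑ i, ∑ j, ∫ x in Icc 0 1, pd i (pd j (G i j)) x * h x := by
        rw [integral_Icc_sum_sum (F := fun i j x => G i j x * hess h x j i)
          fun i j => (hG i j).continuous.mul (hcont₂ hh j i)]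
        simp only [hess, of_apply, integral_pd_pd_mul_eq_of_zPer (hGper _ _) hhper (hG _ _) hh]
    _ = ∫ x in Icc 0 1, (∑ i, ∑ j, pd i (pd j (G i j)) x) * h x := by
        rw [← integral_Icc_sum_sum (F := fun i j x => pd i (pd j (G i j)) x * h x)
          fun i j => (hcont₂ (hG i j) i j).mul hh.continuous]
        simp only [Finset.sum_mul]
    _ = 0 := by simp [hdiv]

section Abreu

variable {u v : (Fin n → ℝ) → ℝ}

lemma ContDiff.hess_inv_apply (hu : ContDiff ℝ ∞ u) (hpos : ∀ x, (hess u x).PosDef)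
    (i j : Fin n) :
    ContDiff ℝ ∞ fun x => (hess u x)⁻¹ i j :=
  contDiff_inv_apply hu.hess_apply (fun x => (hpos x).det_pos.ne') i j

variable (hu : ContDiff ℝ ∞ u) (hv : ContDiff ℝ ∞ v)
  (hposu : ∀ x, (hess u x).PosDef) (hposv : ∀ x, (hess v x).PosDef)
  (hperu : ∀ x (k : Fin n → ℤ), hess u (x + fun i => (k i : ℝ)) = hess u x)
  (hperv : ∀ x (k : Fin n → ℤ), hess v (x + fun i => (k i : ℝ)) = hess v x)
  (hper : ZPer fun x => u x - v x) (habreu : ∀ x, abreuOp u x = abreuOp v x)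
include hu hv hposu hposv hperu hperv hper habreu

theorem integral_trace_inv_hess_mul_hess_sub_eq_zero :
    ∫ x in Icc 0 1, ((hess u x)⁻¹ * hess (fun y => u y - v y) x * (hess v x)⁻¹ *
      hess (fun y => u y - v y) x).trace = 0 := by
  set G : Fin n → Fin n → (Fin n → ℝ) → ℝ :=
    fun i j x => (hess u x)⁻¹ i j - (hess v x)⁻¹ i j
  have hG : ∀ i j, ContDiff ℝ ∞ (G i j) := fun i j =>
    (hu.hess_inv_apply hposu i j).sub (hv.hess_inv_apply hposv i j)
  have hGper : ∀ i j, ZPer (G i j) := fun i j x k => by simp only [G, hperu, hperv]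
  have hdiv : ∀ x, ∑ i, ∑ j, pd i (pd j (G i j)) x = 0 := by
    intro x
    simp only [G, pd_pd_sub _ _ ((hu.hess_inv_apply hposu _ _).of_le (by norm_cast))
      ((hv.hess_inv_apply hposv _ _).of_le (by norm_cast)), Finset.sum_sub_distrib]
    exact sub_eq_zero.mpr (habreu x)
  have hweak := integral_sum_mul_hess_eq_zero_of_zPer
    (fun i j => (hG i j).of_le (by norm_cast)) hGper
    ((hu.sub hv).of_le (by norm_cast)) hper hdiv
  rw [← neg_eq_zero, ← integral_neg, ← hweak]
  congr 1
  ext x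
  rw [hess_sub (hu.of_le (by norm_cast)) (hv.of_le (by norm_cast)), ← trace_inv_sub_inv_mul_sub
    (hposu x).isUnit (hposv x).isUnit]
  rfl

theorem hess_sub_eq_zero_of_abreuOp_eq (x : Fin n → ℝ) : hess (fun y => u y - v y) x = 0 := by
  set W := hess fun y => u y - v y
  have hW : ∀ y, (W y).IsHermitian := hess_isHermitian ((hu.sub hv).of_le (by norm_cast))
  set T := fun y => ((hess u y)⁻¹ * W y * (hess v y)⁻¹ * W y).trace
  have hT₀ : ∀ y, 0 ≤ T y := fun y =>
    (hposu y).inv.posSemidef.trace_mul_mul_mul_nonneg (hposv y).inv.posSemidef (hW y)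
  have hTcont : Continuous T := by
    have hcont : ∀ {M : (Fin n → ℝ) → Matrix (Fin n) (Fin n) ℝ},
        (∀ i j, ContDiff ℝ ∞ fun y => M y i j) → Continuous M :=
      fun hM => continuous_pi fun i => continuous_pi fun j => (hM i j).continuous
    have hWc := hcont (hu.sub hv).hess_apply
    exact ((((hcont (hu.hess_inv_apply hposu)).matrix_mul hWc).matrix_mul
      (hcont (hv.hess_inv_apply hposv))).matrix_mul hWc).matrix_trace
  have hWcube : ∀ y ∈ Icc 0 1, W y = 0 := fun y hy =>
    (hposu y).inv.eq_zero_of_trace_mul_mul_mul_eq_zero (hposv y).inv (hW y)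
      (eqOn_zero_of_integral_Icc_eq_zero hTcont hT₀
        (integral_trace_inv_hess_mul_hess_sub_eq_zero hu hv hposu hposv hperu hperv hper habreu) hy)
  obtain ⟨k, hk⟩ := exists_add_intCast_mem_Icc x
  exact (hper.hess_add_intCast x k).symm.trans (hWcube _ hk)

end Abreu

theorem eq_of_hess_eq_zero_of_zPer {h : (Fin n → ℝ) → ℝ} (hper : ZPer h)
    (hh : ContDiff ℝ 2 h) (hhess : ∀ x, hess h x = 0) (x : Fin n → ℝ) : h x = h 0 := by
  have hd : Differentiable ℝ h := hh.differentiable two_ne_zero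
  have hgrad_const : ∀ j y, pd j h y = pd j h 0 := fun j y =>
    is_const_of_fderiv_eq_zero ((hh.pd (by norm_num) j).differentiable one_ne_zero)
      (fun z => ContinuousLinearMap.ext_pi_single fun i => congrFun₂ (hhess z) i j) y 0
  set L := fderiv ℝ h 0
  have haffine : ∀ y, h y = h 0 + L y := by
    intro y
    have hderiv : ∀ z, fderiv ℝ (fun z => h z - L z) z = 0 := fun z => by
      rw [fderiv_fun_sub (hd z) L.differentiableAt, L.fderiv,
        ContinuousLinearMap.ext_pi_single fun i => hgrad_const i z, sub_self]
    have hconst : h y - L y = h 0 - L 0 :=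
      is_const_of_fderiv_eq_zero (hd.sub L.differentiable) hderiv y 0
    rw [map_zero, sub_zero] at hconst
    linarith
  have hL : L = 0 := ContinuousLinearMap.ext_pi_single fun i => by
    simpa [haffine (Pi.single i 1)] using hper.apply_add_single 0 i
  rw [haffine x, hL, _root_.zero_apply, add_zero]

theorem abreu_periodic_uniqueness_general {n : ℕ} (A φ₀ φ₁ : (Fin n → ℝ) → ℝ)
    (hφ₀ : ContDiff ℝ (⊤ : ℕ∞) φ₀) (hφ₁ : ContDiff ℝ (⊤ : ℕ∞) φ₁)
    (hper₀ : ZPer φ₀) (hper₁ : ZPer φ₁)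
    (hpos₀ : ∀ x, (hess (fun y => (1 / 2 : ℝ) * ∑ i, y i ^ 2 + φ₀ y) x).PosDef)
    (hpos₁ : ∀ x, (hess (fun y => (1 / 2 : ℝ) * ∑ i, y i ^ 2 + φ₁ y) x).PosDef)
    (heq₀ : ∀ x, abreuOp (fun y => (1 / 2 : ℝ) * ∑ i, y i ^ 2 + φ₀ y) x = A x)
    (heq₁ : ∀ x, abreuOp (fun y => (1 / 2 : ℝ) * ∑ i, y i ^ 2 + φ₁ y) x = A x) :
    ∃ c : ℝ, ∀ x, φ₀ x - φ₁ x = c := by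
  have hdiff : (fun y => ((1 / 2 : ℝ) * ∑ i, y i ^ 2 + φ₀ y) -
      ((1 / 2 : ℝ) * ∑ i, y i ^ 2 + φ₁ y)) = fun y => φ₀ y - φ₁ y := by
    funext y
    ring
  have hper : ZPer fun y => φ₀ y - φ₁ y := hper₀.sub hper₁
  have hhess := hess_sub_eq_zero_of_abreuOp_eq (contDiff_half_sum_sq.add hφ₀)
    (contDiff_half_sum_sq.add hφ₁) hpos₀ hpos₁
    (hper₀.hess_half_sum_sq_add (hφ₀.of_le (by norm_cast)))
    (hper₁.hess_half_sum_sq_add (hφ₁.of_le (by norm_cast))) (hdiff ▸ hper)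
    (fun x => (heq₀ x).trans (heq₁ x).symm)
  rw [hdiff] at hhess
  exact ⟨_, eq_of_hess_eq_zero_of_zPer hper ((hφ₀.sub hφ₁).of_le (by norm_cast)) hhess⟩

theorem abreu_periodic_uniqueness {n : ℕ} (A φ₀ φ₁ : (Fin n → ℝ) → ℝ)
    (hφ₀ : ContDiff ℝ (⊤ : ℕ∞) φ₀) (hφ₁ : ContDiff ℝ (⊤ : ℕ∞) φ₁)
    (hper₀ : ZPer φ₀) (hper₁ : ZPer φ₁)
    (hconv₀ : ConvexOn ℝ Set.univ (fun x => (1 / 2 : ℝ) * ∑ i, x i ^ 2 + φ₀ x))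
    (hconv₁ : ConvexOn ℝ Set.univ (fun x => (1 / 2 : ℝ) * ∑ i, x i ^ 2 + φ₁ x))
    (hpos₀ : ∀ x, (hess (fun y => (1 / 2 : ℝ) * ∑ i, y i ^ 2 + φ₀ y) x).PosDef)
    (hpos₁ : ∀ x, (hess (fun y => (1 / 2 : ℝ) * ∑ i, y i ^ 2 + φ₁ y) x).PosDef)
    (heq₀ : ∀ x, abreuOp (fun y => (1 / 2 : ℝ) * ∑ i, y i ^ 2 + φ₀ y) x = A x)
    (heq₁ : ∀ x, abreuOp (fun y => (1 / 2 : ℝ) * ∑ i, y i ^ 2 + φ₁ y) x = A x) :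
    ∃ c : ℝ, ∀ x, φ₀ x - φ₁ x = c :=
  abreu_periodic_uniqueness_general A φ₀ φ₁ hφ₀ hφ₁ hper₀ hper₁ hpos₀ hpos₁ heq₀ heq₁
end

section
/- Let φ : ℝⁿ → ℝ be a smooth ℤⁿ-periodic function with φ(0) = 0 such that x ↦ ½|x|² + φ(x) is convex. Then there is a constant C depending only on n such that |φ(x)| < C and |∇φ(x)| < C for all x ∈ ℝⁿ. -/
open MeasureTheory Matrix

/-! Along the line `t ↦ x + t • eᵢ` the convex function `½|y|² + φ y` reads
`c + xᵢ t + t²/2 + φ (x + t • eᵢ)`, and periodicity makes its secant slopes over `[-1, 0]` and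
`[0, 1]` equal to `xᵢ - ½` and `xᵢ + ½`. Convexity squeezes its derivative `xᵢ + ∂ᵢφ(x)` between
them, so `|∂ᵢφ| ≤ ½` everywhere. This bounds the gradient, and since every point has a translate
in the unit cube `[0, 1)ⁿ`, the mean value inequality from `φ 0 = 0` bounds `φ`. -/

open Set

theorem abs_le_half_of_convexOn_add_sq_div_two {ψ : ℝ → ℝ} {ψ' c a : ℝ} (hψ : HasDerivAt ψ ψ' 0)
    (h1 : ψ 1 = ψ 0) (hm1 : ψ (-1) = ψ 0)
    (hconv : ConvexOn ℝ univ fun t => c + a * t + t ^ 2 / 2 + ψ t) : |ψ'| ≤ 1 / 2 := by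
  have hg : HasDerivAt (fun t => c + a * t + t ^ 2 / 2 + ψ t) (a + ψ') 0 := by
    refine ((((hasDerivAt_id (0 : ℝ)).const_mul a).const_add c).add
      ((hasDerivAt_pow 2 (0 : ℝ)).div_const 2)).add hψ |>.congr_deriv ?_
    simp
  have hup := hconv.le_slope_of_hasDerivAt (mem_univ 0) (mem_univ 1) one_pos hg
  have hlo := hconv.slope_le_of_hasDerivAt (mem_univ (-1)) (mem_univ 0) (by norm_num) hg
  simp only [slope_def_field, h1, hm1] at hup hlo
  rw [abs_le]
  constructor <;> linarith

theorem ZPer.apply_add_smul_single {n : ℕ} {φ : (Fin n → ℝ) → ℝ} (hper : ZPer φ)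
    (x : Fin n → ℝ) (i : Fin n) (m : ℤ) : φ (x + (m : ℝ) • Pi.single i 1) = φ x := by
  convert hper x (Pi.single i m) using 3
  ext j
  by_cases h : j = i <;> simp [h]

theorem ZPer.apply_fract {n : ℕ} {φ : (Fin n → ℝ) → ℝ} (hper : ZPer φ) (x : Fin n → ℝ) :
    φ (fun j => Int.fract (x j)) = φ x := by
  convert hper x (fun j => -⌊x j⌋) using 2
  ext j
  simp [Int.fract, sub_eq_add_neg]

theorem sum_sq_add_smul_single {n : ℕ} (x : Fin n → ℝ) (i : Fin n) (t : ℝ) :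
    ∑ j, (x + t • (Pi.single i 1 : Fin n → ℝ)) j ^ 2 = ∑ j, x j ^ 2 + 2 * x i * t + t ^ 2 := by
  have hj : ∀ j, (x + t • (Pi.single i 1 : Fin n → ℝ)) j ^ 2
      = x j ^ 2 + (Pi.single i (2 * x i * t + t ^ 2) : Fin n → ℝ) j := by
    intro j
    by_cases h : j = i
    · subst h
      simp only [Pi.add_apply, Pi.smul_apply, Pi.single_eq_same, smul_eq_mul, mul_one]
      ring
    · simp [h]
  rw [Finset.sum_congr rfl fun j _ => hj j, Finset.sum_add_distrib, Finset.sum_pi_single',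
    if_pos (Finset.mem_univ i), add_assoc]

theorem abs_pd_le_half {n : ℕ} {φ : (Fin n → ℝ) → ℝ} (hper : ZPer φ)
    (hconv : ConvexOn ℝ univ (fun x => (1 / 2 : ℝ) * ∑ i, x i ^ 2 + φ x))
    {x : Fin n → ℝ} (hx : DifferentiableAt ℝ φ x) (i : Fin n) : |pd i φ x| ≤ 1 / 2 := by
  set e : Fin n → ℝ := Pi.single i 1
  refine abs_le_half_of_convexOn_add_sq_div_two (ψ := fun t => φ (x + t • e))
    (c := (1 / 2) * ∑ j, x j ^ 2) (a := x i) (hx.hasFDerivAt.hasLineDerivAt e)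
    (by simpa using hper.apply_add_smul_single x i 1)
    (by simpa using hper.apply_add_smul_single x i (-1)) ?_
  have h := hconv.comp_affineMap (AffineMap.lineMap x (x + e))
  rw [preimage_univ] at h
  refine h.congr fun t _ => ?_
  have hline : AffineMap.lineMap x (x + e) t = x + t • e := by
    rw [AffineMap.lineMap_apply_module', add_sub_cancel_left, add_comm]
  simp only [Function.comp_apply, hline, e, sum_sq_add_smul_single]
  ring

theorem ContinuousLinearMap.norm_le_sum_abs_apply_single {ι : Type*} [Fintype ι]
    [DecidableEq ι] (L : (ι → ℝ) →L[ℝ] ℝ) : ‖L‖ ≤ ∑ i, |L (Pi.single i 1)| := by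
  refine L.opNorm_le_bound (by positivity) fun v => ?_
  calc ‖L v‖ = |∑ i, v i * L (Pi.single i 1)| := by
        have hsingle : ∀ i, L (Pi.single i (v i)) = v i * L (Pi.single i 1) := fun i => by
          rw [← smul_eq_mul, ← L.map_smul, ← Pi.single_smul', smul_eq_mul, mul_one]
        conv_lhs => rw [← Finset.univ_sum_single v]
        simp only [Real.norm_eq_abs, map_sum, hsingle]
    _ ≤ ∑ i, |v i| * |L (Pi.single i 1)| :=
        (Finset.abs_sum_le_sum_abs _ _).trans_eq (by simp only [abs_mul])
    _ ≤ ∑ i, ‖v‖ * |L (Pi.single i 1)| := by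
        gcongr with i
        exact norm_le_pi_norm v i
    _ = (∑ i, |L (Pi.single i 1)|) * ‖v‖ := by rw [← Finset.mul_sum, mul_comm]

theorem abs_le_of_abs_pd_le {n : ℕ} {φ : (Fin n → ℝ) → ℝ} (hper : ZPer φ) (h0 : φ 0 = 0)
    (hd : Differentiable ℝ φ) {M : ℝ} (hM : ∀ z i, |pd i φ z| ≤ M) (x : Fin n → ℝ) :
    |φ x| ≤ n * M := by
  have hfderiv : ∀ z, ‖fderiv ℝ φ z‖ ≤ n * M := fun z =>
    calc ‖fderiv ℝ φ z‖ ≤ ∑ i, |pd i φ z| := (fderiv ℝ φ z).norm_le_sum_abs_apply_single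
      _ ≤ ∑ _i : Fin n, M := Finset.sum_le_sum fun i _ => hM z i
      _ = n * M := by simp
  set y : Fin n → ℝ := fun j => Int.fract (x j)
  have hy : ‖y‖ ≤ 1 := (pi_norm_le_iff_of_nonneg zero_le_one).2 fun j => by
    rw [Real.norm_eq_abs, abs_of_nonneg (Int.fract_nonneg _)]
    exact (Int.fract_lt_one _).le
  have hmvt := convex_univ.norm_image_sub_le_of_norm_fderiv_le (fun z _ => hd z)
    (fun z _ => hfderiv z) (mem_univ 0) (mem_univ y)
  rw [h0, sub_zero, sub_zero, hper.apply_fract, Real.norm_eq_abs] at hmvt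
  exact hmvt.trans (mul_le_of_le_one_right ((norm_nonneg _).trans (hfderiv 0)) hy)

theorem C0_C1_bound (n : ℕ) :
    ∃ C : ℝ, ∀ φ : (Fin n → ℝ) → ℝ, ContDiff ℝ (⊤ : ℕ∞) φ → ZPer φ → φ 0 = 0 →
      ConvexOn ℝ Set.univ (fun x => (1 / 2 : ℝ) * ∑ i, x i ^ 2 + φ x) →
      ∀ x, |φ x| < C ∧ Real.sqrt (∑ i, (pd i φ x) ^ 2) < C := by
  refine ⟨n / 2 + 1, fun φ hφ hper h0 hconv x => ?_⟩
  have hd : Differentiable ℝ φ := hφ.differentiable (by simp)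
  have hpd : ∀ z i, |pd i φ z| ≤ 1 / 2 := fun z i => abs_pd_le_half hper hconv (hd z) i
  refine ⟨?_, ?_⟩
  · have := abs_le_of_abs_pd_le hper h0 hd hpd x
    linarith
  · rw [Real.sqrt_lt' (by positivity)]
    calc ∑ i, pd i φ x ^ 2 ≤ ∑ _i : Fin n, (1 / 2 : ℝ) ^ 2 :=
          Finset.sum_le_sum fun i _ => sq_le_sq' (abs_le.1 (hpd x i)).1 (abs_le.1 (hpd x i)).2
      _ = n / 4 := by
          simp only [Finset.sum_const, Finset.card_univ, Fintype.card_fin, nsmul_eq_mul]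
          ring
      _ < (n / 2 + 1) ^ 2 := by nlinarith
end
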